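/- The congruence subgroup Γ₀(2) of SL₂(ℤ) is generated by T = [[1,1],[0,1]], [[1,0],[2,1]] and −I. -/

import Mathlib

open Matrix CongruenceSubgroup

local notation "SL(" n ", " R ")" => Matrix.SpecialLinearGroup (Fin n) R

/-- `T = [[1,1],[0,1]]` as an element of `SL(2, ℤ)`. -/
def Tmat : SL(2, ℤ) := ⟨!![1, 1; 0, 1], by simp [Matrix.det_fin_two_of]⟩

/-- `ST²ST = [[1,0],[2,1]]` (up to sign) as an element of `SL(2, ℤ)`. -/
def Lmat : SL(2, ℤ) := ⟨!![1, 0; 2, 1], by simp [Matrix.det_fin_two_of]⟩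

def T'mat : SL(2, ℤ) := ⟨!![1, -1; 0, 1], by simp [Matrix.det_fin_two_of]⟩
def L'mat : SL(2, ℤ) := ⟨!![1, 0; -2, 1], by simp [Matrix.det_fin_two_of]⟩

lemma TT' : Tmat * T'mat = 1 := by
  ext i j
  rw [Matrix.SpecialLinearGroup.coe_mul]
  fin_cases i <;> fin_cases j <;>
    simp [Tmat, T'mat, Matrix.mul_apply, Fin.sum_univ_two]

lemma T'T : T'mat * Tmat = 1 := by
  ext i j
  rw [Matrix.SpecialLinearGroup.coe_mul]
  fin_cases i <;> fin_cases j <;>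
    simp [Tmat, T'mat, Matrix.mul_apply, Fin.sum_univ_two]

lemma LL' : Lmat * L'mat = 1 := by
  ext i j
  rw [Matrix.SpecialLinearGroup.coe_mul]
  fin_cases i <;> fin_cases j <;>
    simp [Lmat, L'mat, Matrix.mul_apply, Fin.sum_univ_two]

lemma L'L : L'mat * Lmat = 1 := by
  ext i j
  rw [Matrix.SpecialLinearGroup.coe_mul]
  fin_cases i <;> fin_cases j <;>
    simp [Lmat, L'mat, Matrix.mul_apply, Fin.sum_univ_two]

lemma mem_cl_aux : ∀ n : ℕ, ∀ g : SL(2, ℤ),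
    (g.1 0 0).natAbs + (g.1 1 0).natAbs ≤ n → (2 : ℤ) ∣ g.1 1 0 →
    g ∈ Subgroup.closure ({Tmat, Lmat, -1} : Set SL(2, ℤ)) := by
  intro n
  induction n using Nat.strong_induction_on with
  | _ n ih =>
    intro g hle h2
    have hT : Tmat ∈ Subgroup.closure ({Tmat, Lmat, -1} : Set SL(2, ℤ)) :=
      Subgroup.subset_closure (by simp)
    have hL : Lmat ∈ Subgroup.closure ({Tmat, Lmat, -1} : Set SL(2, ℤ)) :=
      Subgroup.subset_closure (by simp)
    have hN : (-1 : SL(2, ℤ)) ∈ Subgroup.closure ({Tmat, Lmat, -1} : Set SL(2, ℤ)) :=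
      Subgroup.subset_closure (by simp)
    have hT' : T'mat ∈ Subgroup.closure ({Tmat, Lmat, -1} : Set SL(2, ℤ)) := by
      have := Subgroup.inv_mem _ hT
      rwa [inv_eq_of_mul_eq_one_right TT'] at this
    have hL' : L'mat ∈ Subgroup.closure ({Tmat, Lmat, -1} : Set SL(2, ℤ)) := by
      have := Subgroup.inv_mem _ hL
      rwa [inv_eq_of_mul_eq_one_right LL'] at this
    have hdet : g.1 0 0 * g.1 1 1 - g.1 0 1 * g.1 1 0 = 1 := by
      have := g.2; rwa [Matrix.det_fin_two] at this
    obtain ⟨m, hm⟩ := h2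
    by_cases hc : g.1 1 0 = 0
    · -- terminal case : g = ± T^b
      rw [hc, mul_zero, sub_zero] at hdet
      rcases Int.mul_eq_one_iff_eq_one_or_neg_one.mp hdet with ⟨ha, hd⟩ | ⟨ha, hd⟩
      · have : g = Tmat ^ (g.1 0 1) := by
          ext i j
          rw [show Tmat = ModularGroup.T from rfl, ModularGroup.coe_T_zpow]
          fin_cases i <;> fin_cases j <;> simp [ha, hd, hc]
        rw [this]; exact Subgroup.zpow_mem _ hT _
      · have : g = -1 * Tmat ^ (-(g.1 0 1)) := by
          ext i j
          rw [show Tmat = ModularGroup.T from rfl]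
          simp only [Matrix.SpecialLinearGroup.coe_mul, ModularGroup.coe_T_zpow]
          fin_cases i <;> fin_cases j <;> simp [ha, hd, hc]
        rw [this]; exact Subgroup.mul_mem _ hN (Subgroup.zpow_mem _ hT _)
    · -- a is odd
      have hodd : Odd (g.1 0 0) := by
        have h1 : Odd (g.1 0 0 * g.1 1 1) := by
          refine ⟨g.1 0 1 * m, ?_⟩
          have hdet' : g.1 0 0 * g.1 1 1 - g.1 0 1 * (2 * m) = 1 := by
            rw [← hm]; exact hdet
          linear_combination hdet'
        exact (Int.odd_mul.mp h1).1
      obtain ⟨k, hk⟩ := hodd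
      have hane : (g.1 0 0).natAbs ≠ (g.1 1 0).natAbs := by omega
      rcases Nat.lt_or_ge (g.1 0 0).natAbs (g.1 1 0).natAbs with hlt | hge
      · -- reduce c with an L-step
        have hchoice : (2 * g.1 0 0 + g.1 1 0).natAbs < (g.1 1 0).natAbs ∨
            (-2 * g.1 0 0 + g.1 1 0).natAbs < (g.1 1 0).natAbs := by omega
        rcases hchoice with h | h
        · have e0 : (Lmat * g).1 0 0 = g.1 0 0 := by
            rw [Matrix.SpecialLinearGroup.coe_mul]
            simp [Lmat, Matrix.mul_apply, Fin.sum_univ_two]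
          have e1 : (Lmat * g).1 1 0 = 2 * g.1 0 0 + g.1 1 0 := by
            rw [Matrix.SpecialLinearGroup.coe_mul]
            simp [Lmat, Matrix.mul_apply, Fin.sum_univ_two]
          have hg' : Lmat * g ∈ Subgroup.closure ({Tmat, Lmat, -1} : Set SL(2, ℤ)) := by
            refine ih ((g.1 0 0).natAbs + (2 * g.1 0 0 + g.1 1 0).natAbs) (by omega) _
              (by rw [e0, e1]) ?_
            rw [e1]; exact ⟨g.1 0 0 + m, by omega⟩
          have heq : g = L'mat * (Lmat * g) := by
            rw [← mul_assoc, L'L, one_mul]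
          rw [heq]; exact Subgroup.mul_mem _ hL' hg'
        · have e0 : (L'mat * g).1 0 0 = g.1 0 0 := by
            rw [Matrix.SpecialLinearGroup.coe_mul]
            simp [L'mat, Matrix.mul_apply, Fin.sum_univ_two]
          have e1 : (L'mat * g).1 1 0 = -2 * g.1 0 0 + g.1 1 0 := by
            rw [Matrix.SpecialLinearGroup.coe_mul]
            simp [L'mat, Matrix.mul_apply, Fin.sum_univ_two]
          have hg' : L'mat * g ∈ Subgroup.closure ({Tmat, Lmat, -1} : Set SL(2, ℤ)) := by
            refine ih ((g.1 0 0).natAbs + (-2 * g.1 0 0 + g.1 1 0).natAbs) (by omega) _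
              (by rw [e0, e1]) ?_
            rw [e1]; exact ⟨-(g.1 0 0) + m, by omega⟩
          have heq : g = Lmat * (L'mat * g) := by rw [← mul_assoc, LL', one_mul]
          rw [heq]; exact Subgroup.mul_mem _ hL hg'
      · have hgt : (g.1 1 0).natAbs < (g.1 0 0).natAbs := by omega
        have hchoice : (g.1 0 0 + g.1 1 0).natAbs < (g.1 0 0).natAbs ∨
            (g.1 0 0 - g.1 1 0).natAbs < (g.1 0 0).natAbs := by omega
        rcases hchoice with h | h
        · have e0 : (Tmat * g).1 0 0 = g.1 0 0 + g.1 1 0 := by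
            rw [Matrix.SpecialLinearGroup.coe_mul]
            simp [Tmat, Matrix.mul_apply, Fin.sum_univ_two]
          have e1 : (Tmat * g).1 1 0 = g.1 1 0 := by
            rw [Matrix.SpecialLinearGroup.coe_mul]
            simp [Tmat, Matrix.mul_apply, Fin.sum_univ_two]
          have hg' : Tmat * g ∈ Subgroup.closure ({Tmat, Lmat, -1} : Set SL(2, ℤ)) := by
            refine ih ((g.1 0 0 + g.1 1 0).natAbs + (g.1 1 0).natAbs) (by omega) _
              (by rw [e0, e1]) (by rw [e1]; exact ⟨m, hm⟩)
          have heq : g = T'mat * (Tmat * g) := by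
            rw [← mul_assoc, T'T, one_mul]
          rw [heq]; exact Subgroup.mul_mem _ hT' hg'
        · have e0 : (T'mat * g).1 0 0 = g.1 0 0 - g.1 1 0 := by
            rw [Matrix.SpecialLinearGroup.coe_mul]
            simp [T'mat, Matrix.mul_apply, Fin.sum_univ_two]; ring
          have e1 : (T'mat * g).1 1 0 = g.1 1 0 := by
            rw [Matrix.SpecialLinearGroup.coe_mul]
            simp [T'mat, Matrix.mul_apply, Fin.sum_univ_two]
          have hg' : T'mat * g ∈ Subgroup.closure ({Tmat, Lmat, -1} : Set SL(2, ℤ)) := by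
            refine ih ((g.1 0 0 - g.1 1 0).natAbs + (g.1 1 0).natAbs) (by omega) _
              (by rw [e0, e1]) (by rw [e1]; exact ⟨m, hm⟩)
          have heq : g = Tmat * (T'mat * g) := by rw [← mul_assoc, TT', one_mul]
          rw [heq]; exact Subgroup.mul_mem _ hT hg'

/-- `Γ₀(2)` is generated by `[[1,1],[0,1]]` and `[[1,0],[2,1]]` together with `−I`. -/
theorem Gamma0_two_generators :
    Subgroup.closure ({Tmat, Lmat, -1} : Set SL(2, ℤ)) = Gamma0 2 := by
  apply le_antisymm
  · rw [Subgroup.closure_le]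
    rintro x (rfl | rfl | rfl) <;>
      simp only [SetLike.mem_coe, Gamma0_mem] <;> simp [Tmat, Lmat] <;> decide
  · intro g hg
    rw [Gamma0_mem] at hg
    have h2 : (2 : ℤ) ∣ g.1 1 0 := by
      rwa [ZMod.intCast_zmod_eq_zero_iff_dvd] at hg
    exact mem_cl_aux ((g.1 0 0).natAbs + (g.1 1 0).natAbs) g le_rfl h2
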